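/- For every natural number h and every real λ ≥ 1 there exists a constant c such that the following holds: for every graph G of highway dimension at most h, every vertex v ∈ V, and all reals r ≥ r' > 0 with r/r' ≤ λ, there exists a set V' ⊆ V with |V'| ≤ c such that B(v,r) ⊆ ∪_{v' ∈ V'} B(v',r'). -/

import Mathlib

/-!
A bounded highway dimension yields a doubling property: a ball `B(u, 2ρ)` is covered by
`h + 1` balls of radius `ρ`. The centre `u` handles the points within `ρ` of `u`. For any
other `x ∈ B(u, 2ρ)`, follow `p(x, u)` up to its last vertex `z` with `d(x, z) < ρ`; one more
edge reaches `z'` with `d(x, z') ≥ ρ`, so `p(x, z')` is a `ρ`-witness for `p(x, z)` passing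
through `x`, and `p(x, z) ∈ S(u, ρ)`. A hub of `S(u, ρ)` on `p(x, z)` is then within `ρ` of
`x`. Iterating `k` times with `λ < 2 ^ k` covers `B(v, r) ⊆ B(v, 2 ^ k r')` by `(h + 1) ^ k`
balls of radius `r'`.
-/

open SimpleGraph

/-- The length (total weight) of a walk under an edge-weight function `w`. -/
noncomputable def wlen {V : Type*} {G : SimpleGraph V} (w : Sym2 V → ℝ) {u v : V}
    (p : G.Walk u v) : ℝ :=
  (p.edges.map w).sum

/-- `p` is a subwalk (subpath) of `q`. -/
def IsSubwalk {V : Type*} {G : SimpleGraph V} {u v a b : V}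
    (p : G.Walk u v) (q : G.Walk a b) : Prop :=
  ∃ (q1 : G.Walk a u) (q2 : G.Walk v b), q = (q1.append p).append q2

/-- Shortest-path distance as the infimum of walk lengths. -/
noncomputable def wdist {V : Type*} (G : SimpleGraph V) (w : Sym2 V → ℝ) (u v : V) : ℝ :=
  sInf {x : ℝ | ∃ p : G.Walk u v, x = wlen w p}

/-- A finite connected positively-weighted graph (all weights at least 1) with
unique shortest paths, in which every edge is the unique shortest path between
its endpoints.  `sp u v` is the unique shortest path from `u` to `v`. -/
structure Setting (V : Type) [Fintype V] where
  G : SimpleGraph V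
  w : Sym2 V → ℝ
  connected : G.Connected
  one_le_w : ∀ e ∈ G.edgeSet, 1 ≤ w e
  sp : ∀ u v : V, G.Walk u v
  sp_isPath : ∀ u v : V, (sp u v).IsPath
  sp_shortest : ∀ (u v : V) (q : G.Walk u v), wlen w (sp u v) ≤ wlen w q
  sp_unique : ∀ (u v : V) (q : G.Walk u v), q.IsPath →
    wlen w q = wlen w (sp u v) → q = sp u v
  edge_sp : ∀ (u v : V) (h : G.Adj u v),
    sp u v = SimpleGraph.Walk.cons h SimpleGraph.Walk.nil

namespace Setting

variable {V : Type} [Fintype V]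

/-- Shortest-path distance `d(u,v)`. -/
noncomputable def d (S : Setting V) (u v : V) : ℝ := wlen S.w (S.sp u v)

/-- The ball `B(v,r)`. -/
def ball (S : Setting V) (v : V) (r : ℝ) : Set V := {u : V | S.d v u ≤ r}

/-- `maxedge(p(u,v)) ≤ r`: every edge of the shortest path has weight at most `r`. -/
def maxedgeLE (S : Setting V) (u v : V) (r : ℝ) : Prop :=
  ∀ e ∈ (S.sp u v).edges, S.w e ≤ r

/-- An `(r,k)` vertex cover. -/
def IsVertexCover (S : Setting V) (r : ℝ) (k : ℕ) (C : Set V) : Prop :=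
  (∀ v1 v2 : V, r < S.d v1 v2 → S.maxedgeLE v1 v2 r →
      ∃ c ∈ C, c ∈ (S.sp v1 v2).support) ∧
  (∀ v : V, (S.ball v (2 * r) ∩ C).ncard ≤ k)

/-- Discrete highway dimension at most `h`. -/
def DiscreteHDLE (S : Setting V) (h : ℕ) : Prop :=
  ∀ (v : V) (r : ℝ), 0 < r →
    ∃ C : Set V, C.ncard ≤ h ∧
      ∀ v1 v2 : V, (∀ x ∈ (S.sp v1 v2).support, x ∈ S.ball v (4 * r)) →
        r < S.d v1 v2 → ∃ c ∈ C, c ∈ (S.sp v1 v2).support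

/-- The (unique) shortest path from `v1` to `v2` is `r`-significant:
it has an `r`-witness. -/
def RSignificant (S : Setting V) (r : ℝ) (v1 v2 : V) : Prop :=
  ∃ a b : V, (a = v1 ∨ S.G.Adj a v1) ∧ (b = v2 ∨ S.G.Adj b v2) ∧
    r ≤ S.d a b ∧ IsSubwalk (S.sp v1 v2) (S.sp a b)

/-- The shortest path from `v1` to `v2` is `(r,2r)`-close to `v`,
i.e. it belongs to `S(v,r)`. -/
def InSvr (S : Setting V) (v : V) (r : ℝ) (v1 v2 : V) : Prop :=
  ∃ a b : V, (a = v1 ∨ S.G.Adj a v1) ∧ (b = v2 ∨ S.G.Adj b v2) ∧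
    r ≤ S.d a b ∧ IsSubwalk (S.sp v1 v2) (S.sp a b) ∧
    ∃ x ∈ (S.sp a b).support, S.d v x ≤ 2 * r

/-- Highway dimension at most `h`. -/
def HighwayDimLE (S : Setting V) (h : ℕ) : Prop :=
  ∀ (r : ℝ), 0 < r → ∀ v : V,
    ∃ C : Set V, C.ncard ≤ h ∧
      ∀ v1 v2 : V, S.InSvr v r v1 v2 → ∃ c ∈ C, c ∈ (S.sp v1 v2).support

/-- An `(r,h')`-SPHS. -/
def IsSPHS (S : Setting V) (r : ℝ) (h' : ℕ) (C : Set V) : Prop :=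
  (∀ v1 v2 : V, S.RSignificant r v1 v2 → ∃ c ∈ C, c ∈ (S.sp v1 v2).support) ∧
  (∀ v : V, (C ∩ S.ball v (2 * r)).ncard ≤ h')

/-- Adjacency in the `r`-shortcut graph `G(C,r)`. -/
def shortcutAdj (S : Setting V) (C : Set V) (r : ℝ) (v1 v2 : V) : Prop :=
  v1 ≠ v2 ∧ v1 ∈ C ∧ v2 ∈ C ∧ S.d v1 v2 ≤ r ∧
    ∀ c ∈ C, c ∈ (S.sp v1 v2).support → c = v1 ∨ c = v2

/-- An `(r,η)` path cover, a set of shortest paths represented by their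
endpoint pairs. -/
def IsPathCover (S : Setting V) (r : ℝ) (η : ℕ) (P : Set (V × V)) : Prop :=
  (∀ q ∈ P, r / 4 ≤ S.d q.1 q.2 ∧ S.d q.1 q.2 ≤ r) ∧
  (∀ v1 v2 : V, r / 2 ≤ S.d v1 v2 → S.d v1 v2 ≤ r → S.maxedgeLE v1 v2 (r / 8) →
    ∃ q ∈ P, IsSubwalk (S.sp q.1 q.2) (S.sp v1 v2) ∧
      S.d v1 q.1 ≤ r / 8 ∧ S.d q.2 v2 ≤ r / 8) ∧
  (∀ v : V, {q ∈ P | ∃ x ∈ (S.sp q.1 q.2).support, S.d v x ≤ 4 * r}.ncard ≤ η)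

/-- A pair of vertices of `Cm` is *considered* at level `i`. -/
def Considered (S : Setting V) (Cm : Set V) (i : ℤ) (q : V × V) : Prop :=
  q.1 ∈ Cm ∧ q.2 ∈ Cm ∧
    3 / 4 * (8 : ℝ) ^ i ≤ S.d q.1 q.2 ∧ S.d q.1 q.2 ≤ (8 : ℝ) ^ i ∧
    S.maxedgeLE q.1 q.2 ((8 : ℝ) ^ (i - 1))

/-- `C'` is a valid output of the greedy construction at level `i` from `Cm`. -/
def ValidGreedy (S : Setting V) (Cm : Set V) (i : ℤ) (C' : Set V) : Prop :=
  ∃ (m : ℕ) (q : Fin m → V × V),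
    Function.Injective q ∧
    (∀ p : V × V, S.Considered Cm i p ↔ ∃ j : Fin m, q j = p) ∧
    ∃ Sc : Fin (m + 1) → Set V,
      Sc 0 = ∅ ∧ Sc (Fin.last m) = C' ∧
      ∀ j : Fin m,
        ((∃ c ∈ Sc j.castSucc, c ∈ (S.sp (q j).1 (q j).2).support) →
          Sc j.succ = Sc j.castSucc) ∧
        ((¬ ∃ c ∈ Sc j.castSucc, c ∈ (S.sp (q j).1 (q j).2).support) →
          ∃ c ∈ Cm, c ∈ (S.sp (q j).1 (q j).2).support ∧
            (∀ c' ∈ Cm, c' ∈ (S.sp (q j).1 (q j).2).support →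
              |S.d (q j).1 c - S.d (q j).1 (q j).2 / 2| ≤
                |S.d (q j).1 c' - S.d (q j).1 (q j).2 / 2|) ∧
            Sc j.succ = insert c (Sc j.castSucc))

/-- The set of endpoints of edges of weight greater than `t`. -/
def bigEdgeEnds (S : Setting V) (t : ℝ) : Set V :=
  {x : V | ∃ e ∈ S.G.edgeSet, t < S.w e ∧ x ∈ e}

end Setting

lemma wlen_append {V : Type*} {G : SimpleGraph V} (w : Sym2 V → ℝ) {u v x : V}
    (p : G.Walk u v) (q : G.Walk v x) :
    wlen w (p.append q) = wlen w p + wlen w q := by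
  simp [wlen, Walk.edges_append]

lemma wlen_reverse {V : Type*} {G : SimpleGraph V} (w : Sym2 V → ℝ) {u v : V}
    (p : G.Walk u v) : wlen w p.reverse = wlen w p := by
  simp [wlen, Walk.edges_reverse, List.map_reverse, List.sum_reverse]

lemma Set.ncard_biUnion_le_ncard_mul {ι α : Type*} {t : Set ι} (ht : t.Finite)
    (s : ι → Set α) {M : ℕ} (hs : ∀ i ∈ t, (s i).ncard ≤ M) :
    (⋃ i ∈ t, s i).ncard ≤ t.ncard * M := by
  calc (⋃ i ∈ t, s i).ncard = (⋃ i ∈ ht.toFinset, s i).ncard := by simp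
    _ ≤ ∑ i ∈ ht.toFinset, (s i).ncard := ht.toFinset.set_ncard_biUnion_le s
    _ ≤ ht.toFinset.card * M :=
      Finset.sum_le_card_nsmul _ _ _ fun i hi ↦ hs i (ht.mem_toFinset.mp hi)
    _ = t.ncard * M := by rw [Set.ncard_eq_toFinset_card t ht]

namespace Setting

variable {V : Type} [Fintype V] (S : Setting V)

lemma wlen_nonneg {u v : V} (p : S.G.Walk u v) : 0 ≤ wlen S.w p :=
  List.sum_nonneg fun _ hx ↦ by
    obtain ⟨e, he, rfl⟩ := List.mem_map.mp hx
    exact zero_le_one.trans (S.one_le_w e (p.edges_subset_edgeSet he))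

lemma d_symm (u v : V) : S.d u v = S.d v u := by
  have h₁ := S.sp_shortest u v (S.sp v u).reverse
  have h₂ := S.sp_shortest v u (S.sp u v).reverse
  rw [wlen_reverse] at h₁ h₂
  exact le_antisymm h₁ h₂

lemma eq_sp_of_sp_eq_append {x y z : V} (q₁ : S.G.Walk x z) (q₂ : S.G.Walk z y)
    (h : S.sp x y = q₁.append q₂) : q₁ = S.sp x z := by
  have hpath : q₁.IsPath := by
    have := S.sp_isPath x y
    rw [h] at this
    exact this.of_append_left
  have hle : wlen S.w q₁ ≤ S.d x z := by
    have := S.sp_shortest x y ((S.sp x z).append q₂)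
    rw [h, wlen_append, wlen_append] at this
    exact le_of_add_le_add_right this
  exact S.sp_unique x z q₁ hpath (le_antisymm hle (S.sp_shortest x z q₁))

lemma d_le_of_mem_support {x y c : V} (hc : c ∈ (S.sp x y).support) :
    S.d x c ≤ S.d x y := by
  classical
  have hsplit := ((S.sp x y).take_spec hc).symm
  have hdist : S.d x y = S.d x c + wlen S.w ((S.sp x y).dropUntil c hc) := by
    unfold d
    conv_lhs => rw [hsplit]
    rw [wlen_append, S.eq_sp_of_sp_eq_append _ _ hsplit]
  linarith [S.wlen_nonneg ((S.sp x y).dropUntil c hc)]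

lemma exists_adj_crossing {ρ : ℝ} (hρ : 0 < ρ) {x u : V} (hu : ρ ≤ S.d x u) :
    ∃ z z' : V, ∃ hzz' : S.G.Adj z z', S.d x z < ρ ∧ ρ ≤ S.d x z' ∧
      S.sp x z' = (S.sp x z).concat hzz' := by
  suffices ∀ (a b : V) (p : S.G.Walk a b), p = S.sp a b → ρ ≤ S.d a b →
      ∃ z z' : V, ∃ hzz' : S.G.Adj z z', S.d a z < ρ ∧ ρ ≤ S.d a z' ∧
        S.sp a z' = (S.sp a z).concat hzz' from this x u _ rfl hu
  intro a b p
  induction p using Walk.concatRec with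
  | Hnil =>
    intro hnil hρa
    rw [d, ← hnil] at hρa
    simp only [wlen, Walk.edges_nil, List.map_nil, List.sum_nil] at hρa
    linarith
  | @Hconcat a v b p hvb ih =>
    intro hp hρb
    have hpv : p = S.sp a v :=
      S.eq_sp_of_sp_eq_append _ _ (hp.symm.trans (p.concat_eq_append hvb))
    by_cases hv : S.d a v < ρ
    · exact ⟨v, b, hvb, hv, hρb, by rw [← hp, hpv]⟩
    · exact ih hpv (not_lt.mp hv)

lemma exists_ball_cover_two_mul {h : ℕ} (hHD : S.HighwayDimLE h) (u : V) {ρ : ℝ}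
    (hρ : 0 < ρ) :
    ∃ C : Set V, C.ncard ≤ h + 1 ∧ S.ball u (2 * ρ) ⊆ ⋃ c ∈ C, S.ball c ρ := by
  obtain ⟨hubs, hcard, hhit⟩ := hHD ρ hρ u
  refine ⟨insert u hubs, (Set.ncard_insert_le u hubs).trans (by omega), fun x hx ↦ ?_⟩
  have hux : S.d u x ≤ 2 * ρ := hx
  by_cases hnear : S.d u x ≤ ρ
  · exact Set.mem_biUnion (Set.mem_insert u hubs) hnear
  obtain ⟨z, z', hzz', hz, hz', hsp⟩ :=
    S.exists_adj_crossing hρ (u := u) (by rw [d_symm]; linarith)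
  have hsig : S.InSvr u ρ x z :=
    ⟨x, z', Or.inl rfl, Or.inr hzz'.symm, hz', ⟨Walk.nil, Walk.cons hzz' Walk.nil, by
      rw [hsp, Walk.concat_eq_append, Walk.nil_append]⟩, x, Walk.start_mem_support _,
      by linarith⟩
  obtain ⟨c, hc, hcz⟩ := hhit x z hsig
  refine Set.mem_biUnion (Set.mem_insert_of_mem u hc) ?_
  show S.d c x ≤ ρ
  linarith [S.d_le_of_mem_support hcz, S.d_symm c x]

lemma exists_ball_cover_two_pow_mul {h : ℕ} (hHD : S.HighwayDimLE h) (k : ℕ) (u : V)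
    {ρ : ℝ} (hρ : 0 < ρ) :
    ∃ C : Set V, C.ncard ≤ (h + 1) ^ k ∧ S.ball u (2 ^ k * ρ) ⊆ ⋃ c ∈ C, S.ball c ρ := by
  induction k generalizing u with
  | zero => exact ⟨{u}, by simp, by simp⟩
  | succ k ih =>
    obtain ⟨C, hCcard, hC⟩ := S.exists_ball_cover_two_mul hHD u (ρ := 2 ^ k * ρ) (by positivity)
    choose F hFcard hF using ih
    refine ⟨⋃ c ∈ C, F c, ?_, fun x hx ↦ ?_⟩
    · calc (⋃ c ∈ C, F c).ncard ≤ C.ncard * (h + 1) ^ k :=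
            Set.ncard_biUnion_le_ncard_mul C.toFinite F fun c _ ↦ hFcard c
        _ ≤ (h + 1) ^ (k + 1) := by rw [pow_succ']; exact Nat.mul_le_mul_right _ hCcard
    · rw [pow_succ', mul_assoc] at hx
      obtain ⟨c, hc, hxc⟩ := Set.mem_iUnion₂.mp (hC hx)
      obtain ⟨c', hc', hxc'⟩ := Set.mem_iUnion₂.mp (hF c hxc)
      exact Set.mem_biUnion (Set.mem_biUnion hc hc') hxc'

end Setting

theorem stmt3_general (h : ℕ) (lam : ℝ) :
    ∃ c : ℕ, ∀ (V : Type) [Fintype V] (S : Setting V), S.HighwayDimLE h →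
      ∀ (v : V) (r r' : ℝ), 0 < r' → r' ≤ r → r / r' ≤ lam →
        ∃ V' : Set V, V'.ncard ≤ c ∧ S.ball v r ⊆ ⋃ v' ∈ V', S.ball v' r' := by
  obtain ⟨k, hk⟩ := pow_unbounded_of_one_lt lam one_lt_two
  refine ⟨(h + 1) ^ k, fun V _ S hHD v r r' hr' _ hratio ↦ ?_⟩
  obtain ⟨C, hCcard, hC⟩ := S.exists_ball_cover_two_pow_mul hHD k v hr'
  refine ⟨C, hCcard, fun x hx ↦ hC ?_⟩
  show S.d v x ≤ 2 ^ k * r'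
  calc S.d v x ≤ r := hx
    _ ≤ lam * r' := (div_le_iff₀ hr').mp hratio
    _ ≤ 2 ^ k * r' := by gcongr

/-- Generalized doubling: for bounded ratio `r/r' ≤ λ`,
`B(v,r)` is covered by a bounded number of balls of radius `r'`. -/
theorem stmt3 (h : ℕ) (lam : ℝ) (hlam : 1 ≤ lam) :
    ∃ c : ℕ, ∀ (V : Type) [Fintype V] (S : Setting V), S.HighwayDimLE h →
      ∀ (v : V) (r r' : ℝ), 0 < r' → r' ≤ r → r / r' ≤ lam →
        ∃ V' : Set V, V'.ncard ≤ c ∧ S.ball v r ⊆ ⋃ v' ∈ V', S.ball v' r' :=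
  stmt3_general h lam
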